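/- arXiv:math/0701565 — 4 statements merged into one kernel-verified Lean document; each statement's English description precedes it below -/
import Mathlib

section
/- Let G be a finite group acting on a set, and let G≀Σₙ be the wreath product with multiplication (g₁,…,gₙ,σ)·(h₁,…,hₙ,τ) = (g₁h_{σ⁻¹(1)},…,gₙh_{σ⁻¹(n)},στ). If σ is the n-cycle (1 2 … n) and l is the order of gₙ·gₙ₋₁···g₁ in G, then the order of (g₁,…,gₙ,σ) in G≀Σₙ equals l·n. -/
/-- The action of a permutation on `Fin n → G` by permuting coordinates,
as a monoid homomorphism `Perm (Fin n) →* MulAut (Fin n → G)`. -/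
def permAut (n : ℕ) (G : Type*) [Group G] :
    Equiv.Perm (Fin n) →* MulAut (Fin n → G) where
  toFun σ :=
    { toFun := fun f => f ∘ σ.symm
      invFun := fun f => f ∘ σ
      left_inv := fun f => by funext i; simp
      right_inv := fun f => by funext i; simp
      map_mul' := fun f g => rfl }
  map_one' := rfl
  map_mul' := fun σ τ => rfl

/-- The wreath product `G ≀ Σₙ`, with multiplication
`(g₁,…,gₙ,σ)·(h₁,…,hₙ,τ) = (g₁h_{σ⁻¹(1)},…,gₙh_{σ⁻¹(n)},στ)`. -/
abbrev WreathProduct (G : Type*) [Group G] (n : ℕ) :=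
  SemidirectProduct (Fin n → G) (Equiv.Perm (Fin n)) (permAut n G)

namespace WreathAux

open Fin.NatCast Fin.CommRing

theorem ofFn_rev {α : Type*} : ∀ {m : ℕ} (f : Fin m → α),
    (List.ofFn f).reverse = List.ofFn (fun i => f i.rev)
  | 0, f => by simp
  | m + 1, f => by
    rw [List.ofFn_succ, List.reverse_cons, ofFn_rev, List.ofFn_succ' (fun i => f i.rev)]
    simp [Fin.rev_castSucc, List.concat_eq_append, Fin.rev_last]

variable {n : ℕ}

theorem finRotate_symm_apply (j : Fin (n + 1)) :
    (finRotate (n + 1)).symm j = j - 1 := by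
  rw [Equiv.symm_apply_eq, finRotate_succ_apply, sub_add_cancel]

theorem finRotate_inv_pow (k : ℕ) (j : Fin (n + 1)) :
    ((finRotate (n + 1))⁻¹ ^ k) j = j - (k : Fin (n + 1)) := by
  induction k with
  | zero => simp
  | succ k ih =>
    rw [pow_succ', Equiv.Perm.mul_apply, ih]
    show (finRotate (n + 1)).symm (j - (k : Fin (n+1))) = _
    rw [finRotate_symm_apply]
    push_cast
    rw [sub_sub]

theorem finRotate_pow_eq_one_iff (m : ℕ) :
    (finRotate (n + 1)) ^ m = 1 ↔ (n + 1) ∣ m := by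
  constructor
  · intro h
    have h' : ((finRotate (n + 1))⁻¹ ^ m) 0 = 0 := by
      rw [inv_pow, h, inv_one]; rfl
    rw [finRotate_inv_pow, zero_sub, neg_eq_zero] at h'
    exact (Fin.natCast_eq_zero).1 h'
  · rintro ⟨k, rfl⟩
    have h1 : (finRotate (n + 1)) ^ (n + 1) = 1 := by
      have h2 : ((finRotate (n + 1))⁻¹) ^ (n + 1) = 1 := by
        ext j
        rw [finRotate_inv_pow]
        simp
      rw [inv_pow, inv_eq_one] at h2
      exact h2
    rw [pow_mul, h1, one_pow]

theorem conj_pow_eq {G : Type*} [Group G] (a p : G) (k : ℕ) :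
    (a * p * a⁻¹) ^ k = a * p ^ k * a⁻¹ := by
  induction k with
  | zero => simp
  | succ k ih => rw [pow_succ, pow_succ, ih]; group

variable {G : Type*} [Group G]

theorem pow_left (g : Fin (n + 1) → G) (m : ℕ) :
    ((⟨g, finRotate (n + 1)⟩ : WreathProduct G (n + 1)) ^ m).left =
      fun j => (List.ofFn fun i : Fin m => g (j - (i : ℕ))).prod := by
  induction m with
  | zero => rw [pow_zero]; funext j; simp [SemidirectProduct.one_left]
  | succ m ih =>
    rw [pow_succ', SemidirectProduct.mul_left, ih]
    funext j
    show g j * (List.ofFn fun i : Fin m => g ((finRotate (n+1)).symm j - (i : ℕ))).prod = _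
    rw [finRotate_symm_apply, List.ofFn_succ, List.prod_cons]
    congr 1
    · congr 1; simp
    · refine congrArg List.prod (congrArg List.ofFn (funext fun i => congrArg g ?_))
      rw [Fin.val_succ]
      push_cast
      ring

theorem pow_right (g : Fin (n + 1) → G) (m : ℕ) :
    ((⟨g, finRotate (n + 1)⟩ : WreathProduct G (n + 1)) ^ m).right
      = (finRotate (n + 1)) ^ m := by
  have h : ((⟨g, finRotate (n + 1)⟩ : WreathProduct G (n + 1)) ^ m).right
      = SemidirectProduct.rightHom ((⟨g, finRotate (n + 1)⟩ : WreathProduct G (n + 1)) ^ m) := rfl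
  rw [h, map_pow]
  rfl

end WreathAux

open WreathAux SemidirectProduct Fin.NatCast in
/-- If `σ` is the standard `n`-cycle and `l` is the order of `gₙ⋯g₁` in `G`,
then the order of `(g₁,…,gₙ,σ)` in `G ≀ Σₙ` is `l·n`. -/
theorem order_of_wreath_cycle (G : Type*) [Group G] [Finite G] (n : ℕ)
    (g : Fin (n + 1) → G) :
    orderOf (⟨g, finRotate (n + 1)⟩ : WreathProduct G (n + 1)) =
      orderOf ((List.ofFn g).reverse.prod) * (n + 1) := by
  have hp : (List.ofFn g).reverse.prod = (List.ofFn fun i => g i.rev).prod := by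
    rw [ofFn_rev]
  set x : WreathProduct G (n + 1) := ⟨g, finRotate (n + 1)⟩ with hx
  set p : G := (List.ofFn g).reverse.prod with hpdef
  set P : Fin (n + 1) → G := (x ^ (n + 1)).left with hP
  have hright1 : (x ^ (n + 1)).right = 1 := by
    rw [hx, pow_right, (finRotate_pow_eq_one_iff (n+1)).2 dvd_rfl]
  have hinl : x ^ (n + 1) = inl P := by
    conv_lhs => rw [← inl_left_mul_inr_right (x ^ (n + 1))]
    rw [hright1, map_one, mul_one, hP]
  have hPlast : P (Fin.last n) = p := by
    rw [hp, hP, hx, pow_left]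
    show (List.ofFn fun i : Fin (n+1) => g (Fin.last n - ((i : ℕ) : Fin (n+1)))).prod = _
    refine congrArg List.prod (congrArg List.ofFn (funext fun i => congrArg g ?_))
    rw [Fin.cast_val_eq_self, Fin.last_sub]
  have hrec : ∀ j : Fin (n + 1), P ((finRotate (n + 1)).symm j) = (g j)⁻¹ * P j * g j := by
    intro j
    have hcomm : x * x ^ (n + 1) = x ^ (n + 1) * x := ((Commute.refl x).pow_right (n+1)).eq
    rw [hinl] at hcomm
    have h2 := congrArg SemidirectProduct.left hcomm
    simp only [mul_left, left_inl, right_inl, map_one, MulAut.one_apply] at h2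
    have h3 : g j * P ((finRotate (n+1)).symm j) = P j * g j := congrFun h2 j
    rw [mul_assoc, ← h3, inv_mul_cancel_left]
  have hconj : ∀ j : Fin (n + 1), ∃ a : G, P j = a * p * a⁻¹ := by
    have key : ∀ k : ℕ, ∃ a : G, P (Fin.last n - (k : Fin (n + 1))) = a * p * a⁻¹ := by
      intro k
      induction k with
      | zero => exact ⟨1, by simp [hPlast]⟩
      | succ k ih =>
        obtain ⟨a, ha⟩ := ih
        refine ⟨(g (Fin.last n - (k : Fin (n + 1))))⁻¹ * a, ?_⟩
        have hc : Fin.last n - ((k+1 : ℕ) : Fin (n + 1))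
            = (finRotate (n+1)).symm (Fin.last n - (k : Fin (n + 1))) := by
          rw [WreathAux.finRotate_symm_apply]
          push_cast
          rw [sub_sub]
        rw [hc, hrec, ha]
        group
    intro j
    obtain ⟨a, ha⟩ := key ((Fin.last n - j).val)
    rw [Fin.cast_val_eq_self, sub_sub_cancel] at ha
    exact ⟨a, ha⟩
  have dvd1 : orderOf x ∣ orderOf p * (n + 1) := by
    apply orderOf_dvd_of_pow_eq_one
    rw [mul_comm, pow_mul, hinl, ← map_pow]
    have hPl : P ^ orderOf p = 1 := by
      funext j
      obtain ⟨a, ha⟩ := hconj j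
      simp only [Pi.pow_apply, Pi.one_apply]
      rw [ha, conj_pow_eq, pow_orderOf_eq_one, mul_one, mul_inv_cancel]
    rw [hPl, map_one]
  have dvd2 : orderOf p * (n + 1) ∣ orderOf x := by
    have h1 : (finRotate (n + 1)) ^ orderOf x = 1 := by
      have h := congrArg SemidirectProduct.right (pow_orderOf_eq_one x)
      rw [hx, pow_right] at h
      exact h
    obtain ⟨k, hk⟩ := (finRotate_pow_eq_one_iff (orderOf x)).1 h1
    have hxk : inl (φ := permAut (n+1) G) (P ^ k) = 1 := by
      rw [map_pow, ← hinl, ← pow_mul, ← hk, pow_orderOf_eq_one]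
    have hPk : P ^ k = 1 := inl_injective (by rw [hxk, map_one])
    have hpk : p ^ k = 1 := by
      have h := congrFun hPk (Fin.last n)
      simp only [Pi.pow_apply, Pi.one_apply, hPlast] at h
      exact h
    rw [hk, mul_comm (n+1) k]
    exact mul_dvd_mul (orderOf_dvd_of_pow_eq_one hpk) dvd_rfl
  exact Nat.dvd_antisymm dvd1 dvd2
end

section
/- Let (h̲,τ) be in the centralizer of (g̲,σ) in G≀Σₙ, let (i₁,…,i_k) and (j₁,…,j_k) be k-cycles of σ, and suppose τ(i_r) = j_{r+m} for all r (indices mod k). Then the element h_{j_k}·g⁻¹_{i_{1−m}}···g⁻¹_{i_k} conjugates g_{j_k}···g_{j_1} into g_{i_k}···g_{i_1}, i.e. (h_{j_k}g⁻¹_{i_{1−m}}···g⁻¹_{i_k})⁻¹ · (g_{j_k}···g_{j_1}) · (h_{j_k}g⁻¹_{i_{1−m}}···g⁻¹_{i_k}) = g_{i_k}···g_{i_1}. -/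
section prodFnAux
variable {G : Type*} [Group G]

private def prodFn (N : ℕ) (f : ℕ → G) : G := (List.ofFn fun t : Fin N => f t).prod

private theorem prodFn_zero (f : ℕ → G) : prodFn 0 f = 1 := rfl

private theorem prodFn_congr {N : ℕ} {f g : ℕ → G} (h : ∀ t < N, f t = g t) :
    prodFn N f = prodFn N g := by
  unfold prodFn
  rw [show (fun t : Fin N => f t) = fun t : Fin N => g t from funext fun t => h t t.isLt]

private theorem prodFn_succ (N : ℕ) (f : ℕ → G) :
    prodFn (N + 1) f = prodFn N f * f N := by
  unfold prodFn
  rw [List.ofFn_succ']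
  simp

private theorem prodFn_succ' (N : ℕ) (f : ℕ → G) :
    prodFn (N + 1) f = f 0 * prodFn N (fun t => f (t + 1)) := by
  unfold prodFn
  rw [List.ofFn_succ]
  simp

private theorem prodFn_add (a b : ℕ) (f : ℕ → G) :
    prodFn (a + b) f = prodFn a f * prodFn b (fun t => f (a + t)) := by
  induction b with
  | zero => simp [prodFn_zero]
  | succ b ih =>
      rw [← Nat.add_assoc, prodFn_succ, ih, prodFn_succ, mul_assoc]

private theorem prodFn_telescope (N : ℕ) (b c : ℕ → G) :
    prodFn N (fun t => b t * c t * (b (t + 1))⁻¹) = b 0 * prodFn N c * (b N)⁻¹ := by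
  induction N with
  | zero => simp [prodFn_zero]
  | succ N ih =>
      rw [prodFn_succ, ih, prodFn_succ]
      group

private theorem prodFn_inv (N : ℕ) (f : ℕ → G) :
    prodFn N (fun t => (f t)⁻¹) = (prodFn N (fun t => f (N - 1 - t)))⁻¹ := by
  induction N generalizing f with
  | zero => simp [prodFn_zero]
  | succ N ih =>
      rw [prodFn_succ, ih, prodFn_succ']
      have : (fun t => f (N + 1 - 1 - (t + 1))) = fun t => f (N - 1 - t) := by
        funext t; congr 1; omega
      rw [this, mul_inv_rev]
      norm_num

end prodFnAux


/-- Let `(h,τ)` centralize `(g,σ)` in `G ≀ Σₙ`, let `(i₁,…,i_k)` and `(j₁,…,j_k)` be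
`k`-cycles of `σ` (encoded as functions `i j : ZMod k → Fin n` with `σ(i_r) = i_{r+1}`,
`σ(j_r) = j_{r+1}`, where `i_k = i_0`, `j_k = j_0`), and suppose `τ(i_r) = j_{r+m}`.
Then `s := h_{j_k}·g⁻¹_{i_{1−m}}···g⁻¹_{i_k}` conjugates `g_{j_k}···g_{j_1}` into
`g_{i_k}···g_{i_1}`, i.e. `s⁻¹ (g_{j_k}⋯g_{j_1}) s = g_{i_k}⋯g_{i_1}`. -/
theorem wreath_centralizer_conjugates (G : Type*) [Group G] (n k : ℕ) [NeZero k]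
    (g h : Fin n → G) (σ τ : Equiv.Perm (Fin n))
    (hcomm : Commute (⟨h, τ⟩ : WreathProduct G n) (⟨g, σ⟩ : WreathProduct G n))
    (i j : ZMod k → Fin n)
    (hi : ∀ r : ZMod k, σ (i r) = i (r + 1))
    (hj : ∀ r : ZMod k, σ (j r) = j (r + 1))
    (m : ℕ) (hm : m < k)
    (hτ : ∀ r : ZMod k, τ (i r) = j (r + (m : ZMod k))) :
    (h (j 0) * (List.ofFn fun t : Fin m =>
        (g (i ((((t : ℕ) + 1 : ℕ) : ZMod k) - (m : ZMod k))))⁻¹).prod)⁻¹ *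
      (List.ofFn fun t : Fin k => g (j (-((t : ℕ) : ZMod k)))).prod *
      (h (j 0) * (List.ofFn fun t : Fin m =>
        (g (i ((((t : ℕ) + 1 : ℕ) : ZMod k) - (m : ZMod k))))⁻¹).prod) =
      (List.ofFn fun t : Fin k => g (i (-((t : ℕ) : ZMod k)))).prod := by
  -- extract the pointwise centralizing relation
  have key1 : ∀ x, h x * g (τ.symm x) = g x * h (σ.symm x) := by
    intro x
    have := congrArg SemidirectProduct.left hcomm
    exact congrFun this x
  have key : ∀ r : ZMod k, g (j r) = h (j r) * g (i (r - m)) * (h (j (r - 1)))⁻¹ := by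
    intro r
    have h1 : τ.symm (j r) = i (r - m) := by
      rw [Equiv.symm_apply_eq, hτ]
      congr 1
      ring
    have h2 : σ.symm (j r) = j (r - 1) := by
      rw [Equiv.symm_apply_eq, hj]
      congr 1
      ring
    have h3 := key1 (j r)
    rw [h1, h2] at h3
    rw [eq_mul_inv_iff_mul_eq]
    exact h3.symm
  -- abbreviations
  set b : ℕ → G := fun t => h (j (-(t : ZMod k))) with hbdef
  set cc : ℕ → G := fun t => g (i (-(t : ZMod k))) with hccdef
  set c : ℕ → G := fun t => g (i (-(t : ZMod k) - m)) with hcdef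
  set A : G := prodFn m cc with hAdef
  set B : G := prodFn (k - m) (fun t => cc (t + m)) with hBdef
  -- the j-product telescopes
  have hGj : prodFn k (fun t => g (j (-(t : ZMod k)))) = b 0 * prodFn k c * (b k)⁻¹ := by
    rw [← prodFn_telescope k b c]
    apply prodFn_congr
    intro t _
    have e1 : (-(((t + 1 : ℕ)) : ZMod k)) = -(t : ZMod k) - 1 := by push_cast; ring
    simp only [hbdef, hcdef, e1]
    exact key (-(t : ZMod k))
  have hb0 : b 0 = h (j 0) := by simp [hbdef]
  have hbk : b k = h (j 0) := by simp [hbdef, ZMod.natCast_self]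
  -- rotation: prodFn k c = B * A
  have hc_cc : prodFn k c = prodFn k (fun t => cc (t + m)) := by
    apply prodFn_congr
    intro t _
    simp only [hcdef, hccdef]
    congr 1
    push_cast
    ring
  have hrot : prodFn k c = B * A := by
    rw [hc_cc]
    have hk : (k - m) + m = k := Nat.sub_add_cancel hm.le
    rw [← hk, prodFn_add]
    congr 1
    apply prodFn_congr
    intro t _
    simp only [hccdef]
    congr 1
    have : ((k - m) + t + m : ℕ) = t + k := by omega
    rw [this]
    push_cast [ZMod.natCast_self]
    ring
  -- the i-product: G_i = A * B
  have hGi : prodFn k (fun t => g (i (-(t : ZMod k)))) = A * B := by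
    have hk : m + (k - m) = k := Nat.add_sub_cancel' hm.le
    show prodFn k cc = A * B
    rw [← hk, prodFn_add]
    congr 1
    apply prodFn_congr
    intro t _
    rw [Nat.add_comm]
  -- Q = A⁻¹
  have hQ : prodFn m (fun t => (g (i ((((t + 1 : ℕ)) : ZMod k) - (m : ZMod k))))⁻¹) = A⁻¹ := by
    have e1 : prodFn m (fun t => (g (i ((((t + 1 : ℕ)) : ZMod k) - (m : ZMod k))))⁻¹)
        = prodFn m (fun t => (cc (m - 1 - t))⁻¹) := by
      apply prodFn_congr
      intro t ht
      simp only [hccdef]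
      congr 2
      have h1 : ((m - 1 - t : ℕ) : ZMod k) = (m : ZMod k) - ((t + 1 : ℕ) : ZMod k) := by
        have : (m - 1 - t) + (t + 1) = m := by omega
        have h2 : (((m - 1 - t) + (t + 1) : ℕ) : ZMod k) = (m : ZMod k) := by rw [this]
        push_cast at h2 ⊢
        linear_combination h2
      rw [h1]
      push_cast
      ring
    rw [e1, prodFn_inv]
    congr 1
    apply prodFn_congr
    intro t ht
    congr 2
    omega
  -- assemble
  show (h (j 0) * prodFn m (fun t => (g (i ((((t + 1 : ℕ)) : ZMod k) - (m : ZMod k))))⁻¹))⁻¹ *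
      prodFn k (fun t => g (j (-(t : ZMod k)))) *
      (h (j 0) * prodFn m (fun t => (g (i ((((t + 1 : ℕ)) : ZMod k) - (m : ZMod k))))⁻¹)) =
      prodFn k (fun t => g (i (-(t : ZMod k))))
  rw [hQ, hGj, hGi, hrot, hb0, hbk]
  group
end

section
/- Let σ = (1 … n) ∈ Σₙ and τ₁,…,τₙ ∈ Σ_m, and let τ = τₙ···τ₁. Under the action of Σ_m≀Σₙ on {1,…,m}×{1,…,n} given by (τ̲,σ)(i,j) = (σ(i), τ_{σ(i)}(j)), the element (τ̲,σ) has the property that (j₁ … j_k) is a k-cycle of τ if and only if the orbit of (n, j_k) under (τ̲,σ) has size nk; explicitly ((1,τ₁(j_k)), (2,τ₂τ₁(j_k)), …, (n,j₁), (1,τ₁(j₁)), …, (n,j₂), …, (n,j_k)) is an nk-cycle of (τ̲,σ). -/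
/-- The "skew product" permutation of `{1,…,n}×{1,…,m}` given by an element
`(τ̲,σ)` of `Σ_m ≀ Σₙ`: `(i,j) ↦ (σ(i), τ_{σ(i)}(j))`. -/
def wreathSkew (n m : ℕ) (σ : Equiv.Perm (Fin n)) (τ : Fin n → Equiv.Perm (Fin m)) :
    Equiv.Perm (Fin n × Fin m) where
  toFun p := (σ p.1, τ (σ p.1) p.2)
  invFun p := (σ⁻¹ p.1, (τ p.1)⁻¹ p.2)
  left_inv := by intro p; simp
  right_inv := by intro p; simp

open Fin.NatCast Fin.CommRing

section Aux

variable {n m : ℕ} (τ : Fin (n + 1) → Equiv.Perm (Fin m))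

lemma wreathSkew_fst (t : ℕ) (p : Fin (n + 1) × Fin m) :
    ((⇑(wreathSkew (n + 1) m (finRotate (n + 1)) τ))^[t] p).1 =
      (finRotate (n + 1))^[t] p.1 := by
  induction t generalizing p with
  | zero => rfl
  | succ t ih =>
      simp only [Function.iterate_succ_apply]
      rw [ih]
      rfl

lemma finRotate_iterate (t : ℕ) (x : Fin (n + 1)) :
    (finRotate (n + 1))^[t] x = x + (t : Fin (n + 1)) := by
  induction t with
  | zero => simp
  | succ t ih =>
      rw [Function.iterate_succ_apply', ih, finRotate_succ_apply]
      push_cast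
      ring

lemma wreathSkew_partial (t : ℕ) (ht : t ≤ n + 1) (x : Fin m) :
    (⇑(wreathSkew (n + 1) m (finRotate (n + 1)) τ))^[t] (Fin.last n, x) =
      (Fin.last n + (t : Fin (n + 1)), (((List.ofFn τ).take t).reverse.prod) x) := by
  induction t with
  | zero => simp
  | succ t ih =>
      have ht' : t ≤ n + 1 := Nat.le_of_succ_le ht
      have htlt : t < n + 1 := ht
      rw [Function.iterate_succ_apply', ih ht']
      have hidx : Fin.last n + ((t : ℕ) + 1 : ℕ) = ⟨t, htlt⟩ := by
        apply Fin.ext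
        rw [Fin.add_def]
        simp only [Fin.val_last, Fin.val_natCast]
        rcases Nat.lt_or_ge t n with h | h
        · have h1 : (t + 1) % (n + 1) = t + 1 := Nat.mod_eq_of_lt (by omega)
          rw [h1, show n + (t + 1) = (n + 1) + t by omega,
            Nat.add_mod_left, Nat.mod_eq_of_lt (by omega)]
        · have ht'' : t + 1 = n + 1 := by omega
          rw [ht'', Nat.mod_self, Nat.add_zero, Nat.mod_eq_of_lt (by omega)]
          omega
      have htake : (List.ofFn τ).take (t + 1) =
          (List.ofFn τ).take t ++ [τ ⟨t, htlt⟩] := by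
        rw [List.take_succ]
        congr 1
        rw [List.getElem?_eq_getElem (by simpa using htlt), List.getElem_ofFn]
        rfl
      rw [htake]
      show ((finRotate (n+1)) _, τ ((finRotate (n+1)) _) _) = _
      rw [finRotate_succ_apply]
      have h1 : Fin.last n + (t : Fin (n + 1)) + 1 = Fin.last n + ((t + 1 : ℕ) : Fin (n+1)) := by
        push_cast; ring
      rw [h1, hidx]
      simp [Equiv.Perm.mul_apply]

lemma wreathSkew_full (x : Fin m) :
    (⇑(wreathSkew (n + 1) m (finRotate (n + 1)) τ))^[n + 1] (Fin.last n, x) =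
      (Fin.last n, ((List.ofFn τ).reverse.prod) x) := by
  have := wreathSkew_partial τ (n + 1) le_rfl x
  rw [this]
  congr 1
  · simp
  · congr 2
    rw [List.take_of_length_le (by simp)]

lemma wreathSkew_mul (k : ℕ) (x : Fin m) :
    (⇑(wreathSkew (n + 1) m (finRotate (n + 1)) τ))^[(n + 1) * k] (Fin.last n, x) =
      (Fin.last n, (⇑((List.ofFn τ).reverse.prod))^[k] x) := by
  induction k generalizing x with
  | zero => simp
  | succ k ih =>
      rw [Nat.mul_succ, Function.iterate_add_apply, wreathSkew_full, ih,
        Function.iterate_succ_apply]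

end Aux

/-- Let `σ = (1 … n)` be the standard cycle, `τ₁,…,τₙ ∈ Σ_m`, and
`τ = τₙ∘⋯∘τ₁`.  Under the action of `(τ̲,σ) ∈ Σ_m ≀ Σₙ` on `{1,…,n}×{1,…,m}`
given by `(i,j) ↦ (σ(i), τ_{σ(i)}(j))`, the orbit of the point `(n, j)` has size
`n·k`, where `k` is the size of the orbit of `j` under `τ`; i.e. `(j₁…j_k)` is a
`k`-cycle of `τ` iff the orbit of `(n, j_k)` under `(τ̲,σ)` is an `nk`-cycle. -/
theorem wreath_skew_orbit_size (n m : ℕ) (τ : Fin (n + 1) → Equiv.Perm (Fin m))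
    (j : Fin m) :
    Function.minimalPeriod
        (⇑(wreathSkew (n + 1) m (finRotate (n + 1)) τ)) (Fin.last n, j) =
      (n + 1) * Function.minimalPeriod (⇑((List.ofFn τ).reverse.prod)) j := by
  set F := wreathSkew (n + 1) m (finRotate (n + 1)) τ with hF
  set L := (List.ofFn τ).reverse.prod with hL
  set a : Fin (n + 1) × Fin m := (Fin.last n, j) with ha
  -- both points are periodic (permutations of finite types)
  have hFper : a ∈ Function.periodicPts ⇑F := by
    refine ⟨orderOf F, orderOf_pos F, ?_⟩
    show (⇑F)^[orderOf F] a = a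
    rw [Equiv.Perm.iterate_eq_pow, pow_orderOf_eq_one]; rfl
  have hLper : j ∈ Function.periodicPts ⇑L := by
    refine ⟨orderOf L, orderOf_pos L, ?_⟩
    show (⇑L)^[orderOf L] j = j
    rw [Equiv.Perm.iterate_eq_pow, pow_orderOf_eq_one]; rfl
  set N := Function.minimalPeriod (⇑F) a with hN
  set k := Function.minimalPeriod (⇑L) j with hk
  have hNpos : 0 < N := Function.minimalPeriod_pos_of_mem_periodicPts hFper
  have hkpos : 0 < k := Function.minimalPeriod_pos_of_mem_periodicPts hLper
  -- N divides (n+1)*k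
  have hdvd1 : N ∣ (n + 1) * k := by
    apply Function.IsPeriodicPt.minimalPeriod_dvd
    show (⇑F)^[(n + 1) * k] a = a
    rw [ha, wreathSkew_mul]
    rw [Function.iterate_minimalPeriod]
  -- (n+1)*k divides N
  have hdvd2 : (n + 1) * k ∣ N := by
    have hNp : (⇑F)^[N] a = a := Function.iterate_minimalPeriod
    -- first coordinate: (n+1) ∣ N
    have hfst : (n + 1) ∣ N := by
      have := congrArg Prod.fst hNp
      rw [ha, wreathSkew_fst, finRotate_iterate] at this
      simp only at this
      have : ((N : ℕ) : Fin (n + 1)) = 0 := by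
        have h2 := this
        have : Fin.last n + (N : Fin (n+1)) = Fin.last n + 0 := by rw [add_zero]; exact h2
        exact add_left_cancel this
      exact (Fin.natCast_eq_zero).mp this
    obtain ⟨s, hs⟩ := hfst
    have hsnd : (⇑L)^[s] j = j := by
      have := hNp
      rw [hs, ha, wreathSkew_mul] at this
      exact congrArg Prod.snd this
    have : k ∣ s := Function.IsPeriodicPt.minimalPeriod_dvd hsnd
    rw [hs]
    exact mul_dvd_mul_left (n + 1) this
  exact Nat.dvd_antisymm hdvd1 hdvd2
end

section
/- Let (σ,τ) be a pair of commuting permutations in Σₙ such that the subgroup ⟨σ,τ⟩ acts transitively on {1,…,n}. Then all cycles of σ have the same length k, and writing n = Nk, the conjugacy class (under simultaneous conjugation) of the pair (σ,τ) is uniquely determined by the cycle length k and an integer m ∈ {0,1,…,k−1}. In particular there are exactly ∑_{k | n} k = σ₁(n) such simultaneous conjugacy classes. -/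
open Equiv Function
set_option linter.unusedSectionVars false

namespace CTP

variable (k N m : ℕ) [NeZero k] [NeZero N]

/-- model sigma: add (1,0) -/
def mσ : Perm (ZMod k × ZMod N) := Equiv.addRight ((1, 0) : ZMod k × ZMod N)

/-- model tau: add 1 to second coordinate, with a shift by `-m` on wraparound. -/
def mτ : Perm (ZMod k × ZMod N) where
  toFun p := (p.1 - if p.2 = -1 then (m : ZMod k) else 0, p.2 + 1)
  invFun p := (p.1 + if p.2 = 0 then (m : ZMod k) else 0, p.2 - 1)
  left_inv := by
    rintro ⟨a, b⟩
    have : (b + 1 = 0) ↔ (b = -1) := by constructor <;> intro h <;> linear_combination h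
    simp only [this]
    by_cases hb : b = -1 <;> simp [hb]
  right_inv := by
    rintro ⟨a, b⟩
    have : (b - 1 = -1) ↔ (b = 0) := by constructor <;> intro h <;> linear_combination h
    simp only [this]
    by_cases hb : b = 0 <;> simp [hb]

lemma mσ_apply (p : ZMod k × ZMod N) : mσ k N p = (p.1 + 1, p.2) := by
  simp [mσ, Equiv.coe_addRight, Prod.add_def]

lemma mτ_apply (p : ZMod k × ZMod N) :
    mτ k N m p = (p.1 - if p.2 = -1 then (m : ZMod k) else 0, p.2 + 1) := rfl

lemma mσ_pow (j : ℕ) (p : ZMod k × ZMod N) : (mσ k N ^ j) p = (p.1 + j, p.2) := by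
  induction j with
  | zero => simp
  | succ i ih =>
      rw [pow_succ', Equiv.Perm.mul_apply, ih, mσ_apply]
      push_cast
      simp [add_assoc]

lemma comm_model : Commute (mσ k N) (mτ k N m) := by
  apply Equiv.ext
  rintro ⟨a, b⟩
  simp only [Equiv.Perm.mul_apply, mσ_apply, mτ_apply]
  ring_nf

lemma mτ_pow_lt (a : ZMod k) (b : ℕ) (hb : b < N) :
    ((mτ k N m) ^ b) (a, 0) = (a, (b : ZMod N)) := by
  induction b with
  | zero => simp
  | succ i ih =>
      have hi : i < N := Nat.lt_of_succ_lt hb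
      rw [pow_succ', Equiv.Perm.mul_apply, ih hi, mτ_apply]
      have hne : ((i : ZMod N)) ≠ -1 := by
        intro h
        have : ((i + 1 : ℕ) : ZMod N) = 0 := by push_cast [h]; ring
        rw [ZMod.natCast_eq_zero_iff] at this
        exact absurd (Nat.le_of_dvd (Nat.succ_pos i) this) (not_le.mpr hb)
      simp [hne]

lemma mτ_pow_N (a : ZMod k) : ((mτ k N m) ^ N) (a, 0) = (a - m, 0) := by
  have hN : N - 1 + 1 = N := Nat.succ_pred_eq_of_pos (NeZero.pos N)
  have h1 : ((N - 1 : ℕ) : ZMod N) = -1 := by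
    have : ((N - 1 : ℕ) : ZMod N) + 1 = 0 := by
      rw [← Nat.cast_succ, Nat.succ_eq_add_one, hN, ZMod.natCast_self]
    linear_combination this
  have hpow : (mτ k N m) ^ N = (mτ k N m) ^ (N - 1 + 1) := by rw [hN]
  rw [hpow, pow_succ', Equiv.Perm.mul_apply, mτ_pow_lt k N m a (N-1) (by omega), h1, mτ_apply]
  simp [h1]

lemma mτ_pow_N_all (p : ZMod k × ZMod N) : ((mτ k N m) ^ N) p = (p.1 - m, p.2) := by
  obtain ⟨a, b⟩ := p
  have hb : ((b.val : ℕ) : ZMod N) = b := ZMod.natCast_rightInverse b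
  have h1 : ((mτ k N m) ^ b.val) (a, 0) = (a, b) := by
    rw [mτ_pow_lt k N m a b.val (ZMod.val_lt b), hb]
  have h2 : ((mτ k N m) ^ b.val) (a - m, 0) = (a - m, b) := by
    rw [mτ_pow_lt k N m _ b.val (ZMod.val_lt b), hb]
  calc ((mτ k N m) ^ N) (a, b) = (((mτ k N m) ^ N) * ((mτ k N m) ^ b.val)) (a, 0) := by
        rw [Equiv.Perm.mul_apply, h1]
    _ = (((mτ k N m) ^ b.val) * ((mτ k N m) ^ N)) (a, 0) := by rw [pow_mul_comm]
    _ = (a - m, b) := by rw [Equiv.Perm.mul_apply, mτ_pow_N, h2]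

lemma model_rel : (mτ k N m) ^ N * (mσ k N) ^ m = 1 := by
  apply Equiv.ext
  rintro ⟨a, b⟩
  rw [Equiv.Perm.mul_apply, mσ_pow, mτ_pow_N_all]
  simp

lemma model_pow_eq_one (j : ℕ) : (mσ k N) ^ j = 1 ↔ k ∣ j := by
  constructor
  · intro h
    have := congrArg (fun f : Perm (ZMod k × ZMod N) => f ((0 : ZMod k), (0 : ZMod N))) h
    simp only [mσ_pow, Equiv.Perm.coe_one, id_eq, Prod.mk.injEq] at this
    rw [← ZMod.natCast_eq_zero_iff]
    simpa using this.1
  · intro h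
    apply Equiv.ext
    rintro ⟨a, b⟩
    rw [mσ_pow]
    have : ((j : ℕ) : ZMod k) = 0 := (ZMod.natCast_eq_zero_iff j k).mpr h
    simp [this]

lemma model_min_period (p : ZMod k × ZMod N) : minimalPeriod (⇑(mσ k N)) p = k := by
  have hper : ∀ j : ℕ, IsPeriodicPt (⇑(mσ k N)) j p ↔ k ∣ j := by
    intro j
    rw [IsPeriodicPt, IsFixedPt, Equiv.Perm.iterate_eq_pow, mσ_pow]
    constructor
    · intro h
      rw [← ZMod.natCast_eq_zero_iff]
      have := (Prod.mk.injEq _ _ _ _).mp h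
      have h2 := this.1
      -- p.1 + j = p.1
      have : ((j : ℕ) : ZMod k) = 0 := by
        have := congrArg (fun x => x - p.1) h2
        simpa [add_comm] using this
      exact this
    · intro h
      have : ((j : ℕ) : ZMod k) = 0 := (ZMod.natCast_eq_zero_iff j k).mpr h
      simp [this]
  have h1 : minimalPeriod (⇑(mσ k N)) p ∣ k :=
    IsPeriodicPt.minimalPeriod_dvd ((hper k).mpr dvd_rfl)
  have h2 : k ∣ minimalPeriod (⇑(mσ k N)) p :=
    (hper _).mp (isPeriodicPt_minimalPeriod _ _)
  exact Nat.dvd_antisymm h1 h2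

lemma model_word (p : ZMod k × ZMod N) :
    ((mτ k N m) ^ p.2.val * (mσ k N) ^ p.1.val) ((0 : ZMod k), (0 : ZMod N)) = p := by
  rw [Equiv.Perm.mul_apply, mσ_pow]
  have h1 : ((p.1.val : ℕ) : ZMod k) = p.1 := ZMod.natCast_rightInverse p.1
  have h2 : ((p.2.val : ℕ) : ZMod N) = p.2 := ZMod.natCast_rightInverse p.2
  simp only [zero_add, h1]
  rw [mτ_pow_lt k N m p.1 p.2.val (ZMod.val_lt p.2), h2]

/-- conjugation by an equiv, as a monoid hom of permutation groups -/
def pcHom {α β : Type*} (e : α ≃ β) : Perm α →* Perm β where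
  toFun f := e.permCongr f
  map_one' := by ext x; simp
  map_mul' f g := by ext x; simp [Equiv.Perm.mul_apply]

lemma pcHom_apply {α β : Type*} (e : α ≃ β) (f : Perm α) (x : β) :
    pcHom e f x = e (f (e.symm x)) := rfl

lemma pcHom_injective {α β : Type*} (e : α ≃ β) : Function.Injective (pcHom e) := by
  intro f g h
  ext x
  have := congrArg (fun p : Perm β => e.symm (p (e x))) h
  simpa [pcHom_apply] using this

lemma minimalPeriod_eq_of_iff {α β : Type*} {f : α → α} {g : β → β} {x : α} {y : β}
    (h : ∀ j : ℕ, IsPeriodicPt f j x ↔ IsPeriodicPt g j y) :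
    minimalPeriod f x = minimalPeriod g y := by
  apply Nat.dvd_antisymm
  · exact IsPeriodicPt.minimalPeriod_dvd ((h _).mpr (isPeriodicPt_minimalPeriod _ _))
  · exact IsPeriodicPt.minimalPeriod_dvd ((h _).mp (isPeriodicPt_minimalPeriod _ _))

lemma minimalPeriod_pcHom {α β : Type*} (e : α ≃ β) (f : Perm α) (x : α) :
    minimalPeriod (⇑(pcHom e f)) (e x) = minimalPeriod (⇑f) x := by
  apply minimalPeriod_eq_of_iff
  intro j
  rw [IsPeriodicPt, IsPeriodicPt, IsFixedPt, IsFixedPt,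
    Equiv.Perm.iterate_eq_pow, Equiv.Perm.iterate_eq_pow, ← map_pow]
  rw [pcHom_apply]
  simp only [Equiv.symm_apply_apply]
  constructor
  · intro h; exact e.injective h
  · intro h; rw [h]

lemma minimalPeriod_eq_of_iff' {α β : Type*} {f : α → α} {g : β → β} {x : α} {y : β}
    (h : ∀ j : ℕ, IsPeriodicPt f j x ↔ IsPeriodicPt g j y) :
    minimalPeriod f x = minimalPeriod g y := by
  apply Nat.dvd_antisymm
  · exact IsPeriodicPt.minimalPeriod_dvd ((h _).mpr (isPeriodicPt_minimalPeriod _ _))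
  · exact IsPeriodicPt.minimalPeriod_dvd ((h _).mp (isPeriodicPt_minimalPeriod _ _))

lemma minimalPeriod_conj {α : Type*} (ρ f : Perm α) (x : α) :
    minimalPeriod (⇑(ρ * f * ρ⁻¹)) (ρ x) = minimalPeriod (⇑f) x := by
  apply minimalPeriod_eq_of_iff'
  intro j
  rw [IsPeriodicPt, IsPeriodicPt, IsFixedPt, IsFixedPt,
    Equiv.Perm.iterate_eq_pow, Equiv.Perm.iterate_eq_pow, conj_pow]
  simp only [Equiv.Perm.mul_apply, Equiv.Perm.inv_def, Equiv.symm_apply_apply]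
  exact ⟨fun h => ρ.injective h, fun h => by rw [h]⟩

lemma mem_closure_pair {G : Type*} [Group G] {σ τ : G} (hc : Commute σ τ) {w : G}
    (hw : w ∈ Subgroup.closure ({σ, τ} : Set G)) : ∃ i j : ℤ, w = σ ^ i * τ ^ j := by
  induction hw using Subgroup.closure_induction with
  | mem x hx =>
      rcases hx with h | h
      · exact ⟨1, 0, by simp [h]⟩
      · simp only [Set.mem_singleton_iff] at h
        exact ⟨0, 1, by simp [h]⟩
  | one => exact ⟨0, 0, by simp⟩
  | mul x y _ _ ihx ihy =>
      obtain ⟨i, j, rfl⟩ := ihx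
      obtain ⟨a, b, rfl⟩ := ihy
      refine ⟨i + a, j + b, ?_⟩
      have h1 : Commute (τ ^ j) (σ ^ a) := (hc.symm.zpow_zpow j a)
      rw [zpow_add, zpow_add]
      calc σ ^ i * τ ^ j * (σ ^ a * τ ^ b) = σ ^ i * (τ ^ j * σ ^ a) * τ ^ b := by group
        _ = σ ^ i * (σ ^ a * τ ^ j) * τ ^ b := by rw [h1.eq]
        _ = σ ^ i * σ ^ a * (τ ^ j * τ ^ b) := by group
  | inv x _ ihx =>
      obtain ⟨i, j, rfl⟩ := ihx
      refine ⟨-i, -j, ?_⟩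
      have h1 : Commute (τ ^ (-j)) (σ ^ (-i)) := (hc.symm.zpow_zpow _ _)
      rw [mul_inv_rev, ← zpow_neg, ← zpow_neg, h1.eq]

lemma zpow_mul_zpow_mem {G : Type*} [Group G] (σ τ : G) (i j : ℤ) :
    σ ^ i * τ ^ j ∈ Subgroup.closure ({σ, τ} : Set G) := by
  exact mul_mem (zpow_mem (Subgroup.subset_closure (by simp)) i)
    (zpow_mem (Subgroup.subset_closure (by simp)) j)

/-- freeness of the action for a transitive pair of commuting permutations -/
lemma free {n : ℕ} {σ τ : Perm (Fin n)} (hc : Commute σ τ)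
    (ht : ∀ x y : Fin n, ∃ w ∈ Subgroup.closure ({σ, τ} : Set (Perm (Fin n))), w x = y)
    {i j : ℤ} {x : Fin n} (hx : (σ ^ i * τ ^ j) x = x) : σ ^ i * τ ^ j = 1 := by
  apply Equiv.ext
  intro y
  suffices h : (σ ^ i * τ ^ j) y = y by simpa using h
  obtain ⟨w, hw, hwx⟩ := ht x y
  obtain ⟨a, b, rfl⟩ := mem_closure_pair hc hw
  have hcomm : Commute (σ ^ i * τ ^ j) (σ ^ a * τ ^ b) := by
    exact Commute.mul_left
      (Commute.mul_right (Commute.zpow_zpow (Commute.refl σ) i a) (hc.zpow_zpow i b))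
      (Commute.mul_right ((hc.symm).zpow_zpow j a) (Commute.zpow_zpow (Commute.refl τ) j b))
  calc (σ ^ i * τ ^ j) y = (σ ^ i * τ ^ j) ((σ ^ a * τ ^ b) x) := by rw [hwx]
    _ = ((σ ^ i * τ ^ j) * (σ ^ a * τ ^ b)) x := rfl
    _ = ((σ ^ a * τ ^ b) * (σ ^ i * τ ^ j)) x := by rw [hcomm.eq]
    _ = (σ ^ a * τ ^ b) ((σ ^ i * τ ^ j) x) := rfl
    _ = y := by rw [hx, hwx]

def zmodFin (k : ℕ) [NeZero k] : ZMod k ≃ Fin k where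
  toFun a := ⟨a.val, a.val_lt⟩
  invFun i := (i.val : ZMod k)
  left_inv a := ZMod.natCast_rightInverse a
  right_inv i := by
    ext
    exact ZMod.val_cast_of_lt i.isLt

def stdE (n k N : ℕ) [NeZero k] [NeZero N] (h : k * N = n) : (ZMod k × ZMod N) ≃ Fin n :=
  ((zmodFin k).prodCongr (zmodFin N)).trans (finProdFinEquiv.trans (finCongr h))

def modelPairAux (n k N mm : ℕ) : Perm (Fin n) × Perm (Fin n) :=
  if h : k * N = n ∧ 0 < k ∧ 0 < N then
    haveI : NeZero k := ⟨h.2.1.ne'⟩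
    haveI : NeZero N := ⟨h.2.2.ne'⟩
    (pcHom (stdE n k N h.1) (mσ k N), pcHom (stdE n k N h.1) (mτ k N mm))
  else (1, 1)

lemma modelPairAux_spec (n k N mm : ℕ) (h : k * N = n ∧ 0 < k ∧ 0 < N) (hm : mm < k) :
    Commute (modelPairAux n k N mm).1 (modelPairAux n k N mm).2 ∧
    (∀ x y : Fin n, ∃ w ∈ Subgroup.closure
        ({(modelPairAux n k N mm).1, (modelPairAux n k N mm).2} : Set (Perm (Fin n))), w x = y) ∧
    (∀ x : Fin n, Function.minimalPeriod (⇑(modelPairAux n k N mm).1) x = k) ∧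
    ((modelPairAux n k N mm).2 ^ N * (modelPairAux n k N mm).1 ^ mm = 1) ∧
    (∀ j : ℕ, (modelPairAux n k N mm).1 ^ j = 1 ↔ k ∣ j) := by
  haveI : NeZero k := ⟨h.2.1.ne'⟩
  haveI : NeZero N := ⟨h.2.2.ne'⟩
  have hpair : modelPairAux n k N mm
      = (pcHom (stdE n k N h.1) (mσ k N), pcHom (stdE n k N h.1) (mτ k N mm)) := by
    rw [modelPairAux, dif_pos h]
  set E := stdE n k N h.1 with hE
  rw [hpair]
  refine ⟨?_, ?_, ?_, ?_, ?_⟩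
  · exact (comm_model k N mm).map (pcHom E)
  · intro x y
    set u := E.symm x with hu
    set v := E.symm y with hv
    have wmem : ∀ p : ZMod k × ZMod N,
        (mτ k N mm) ^ p.2.val * (mσ k N) ^ p.1.val ∈
          Subgroup.closure ({mσ k N, mτ k N mm} : Set (Perm (ZMod k × ZMod N))) := by
      intro p
      exact mul_mem (pow_mem (Subgroup.subset_closure (by simp)) _)
        (pow_mem (Subgroup.subset_closure (by simp)) _)
    set wu := (mτ k N mm) ^ u.2.val * (mσ k N) ^ u.1.val with hwu
    set wv := (mτ k N mm) ^ v.2.val * (mσ k N) ^ v.1.val with hwv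
    have hw0 : (wv * wu⁻¹) u = v := by
      have h1 : wu ((0 : ZMod k), (0 : ZMod N)) = u := model_word k N mm u
      have h2 : wu⁻¹ u = ((0 : ZMod k), (0 : ZMod N)) := by
        rw [← h1]; exact Equiv.symm_apply_apply _ _
      rw [Equiv.Perm.mul_apply, h2]
      exact model_word k N mm v
    have hmem : wv * wu⁻¹ ∈
        Subgroup.closure ({mσ k N, mτ k N mm} : Set (Perm (ZMod k × ZMod N))) :=
      mul_mem (wmem v) (inv_mem (wmem u))
    refine ⟨pcHom E (wv * wu⁻¹), ?_, ?_⟩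
    · have : pcHom E (wv * wu⁻¹) ∈
          (Subgroup.closure ({mσ k N, mτ k N mm} : Set (Perm (ZMod k × ZMod N)))).map (pcHom E) :=
        Subgroup.mem_map_of_mem _ hmem
      rwa [MonoidHom.map_closure, Set.image_pair] at this
    · rw [pcHom_apply, ← hu, hw0, hv]
      exact Equiv.apply_symm_apply E y
  · intro x
    have := minimalPeriod_pcHom E (mσ k N) (E.symm x)
    rw [Equiv.apply_symm_apply] at this
    rw [this, model_min_period]
  · rw [← map_pow, ← map_pow, ← map_mul, model_rel, map_one]
  · intro j
    rw [← map_pow]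
    constructor
    · intro hj
      have : (mσ k N) ^ j = 1 := pcHom_injective E (by rw [hj, map_one])
      exact (model_pow_eq_one k N j).mp this
    · intro hj
      rw [(model_pow_eq_one k N j).mpr hj, map_one]

lemma model_rigid {n : ℕ} {k N mm k' N' mm' : ℕ}
    (h : k * N = n ∧ 0 < k ∧ 0 < N) (h' : k' * N' = n ∧ 0 < k' ∧ 0 < N')
    (hm : mm < k) (hm' : mm' < k') (ρ : Perm (Fin n))
    (h1 : ρ * (modelPairAux n k N mm).1 * ρ⁻¹ = (modelPairAux n k' N' mm').1)
    (h2 : ρ * (modelPairAux n k N mm).2 * ρ⁻¹ = (modelPairAux n k' N' mm').2) :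
    k = k' ∧ N = N' ∧ mm = mm' := by
  obtain ⟨-, -, hper, hrel, hpow⟩ := modelPairAux_spec n k N mm h hm
  obtain ⟨-, -, hper', hrel', hpow'⟩ := modelPairAux_spec n k' N' mm' h' hm'
  have hnpos : 0 < n := by rw [← h.1]; exact Nat.mul_pos h.2.1 h.2.2
  have x0 : Fin n := ⟨0, hnpos⟩
  have hkk : k = k' := by
    have := minimalPeriod_conj ρ (modelPairAux n k N mm).1 x0
    rw [h1] at this
    rw [← hper x0, ← this, hper' (ρ x0)]
  have hNN : N = N' := by
    apply Nat.eq_of_mul_eq_mul_left h.2.1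
    rw [h.1, hkk, h'.1]
  refine ⟨hkk, hNN, ?_⟩
  subst hkk
  subst hNN
  have e1 : (modelPairAux n k N mm').2 ^ N * (modelPairAux n k N mm').1 ^ mm = 1 := by
    have hconj : ρ * ((modelPairAux n k N mm).2 ^ N * (modelPairAux n k N mm).1 ^ mm) * ρ⁻¹
        = (ρ * (modelPairAux n k N mm).2 * ρ⁻¹) ^ N
          * (ρ * (modelPairAux n k N mm).1 * ρ⁻¹) ^ mm := by
      rw [conj_pow, conj_pow]; group
    rw [hrel] at hconj
    rw [← h1, ← h2, ← hconj]
    group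
  have e2 := hrel'
  have hcancel : (modelPairAux n k N mm').1 ^ mm = (modelPairAux n k N mm').1 ^ mm' :=
    mul_left_cancel (e1.trans e2.symm)
  have hord : orderOf (modelPairAux n k N mm').1 = k :=
    Nat.dvd_antisymm (orderOf_dvd_of_pow_eq_one ((hpow' k).mpr dvd_rfl))
      ((hpow' _).mp (pow_orderOf_eq_one _))
  have := pow_eq_pow_iff_modEq.mp hcancel
  rw [hord] at this
  have := this
  rw [Nat.ModEq] at this
  rw [Nat.mod_eq_of_lt hm, Nat.mod_eq_of_lt hm'] at this
  exact this

set_option maxHeartbeats 2000000 in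
lemma exists_model {n : ℕ} (hn : 0 < n) (σ τ : Perm (Fin n)) (hc : Commute σ τ)
    (ht : ∀ x y : Fin n, ∃ w ∈ Subgroup.closure ({σ, τ} : Set (Perm (Fin n))), w x = y) :
    ∃ k N mm : ℕ, (k * N = n ∧ 0 < k ∧ 0 < N) ∧ mm < k ∧
      ∃ ρ : Perm (Fin n), ρ * σ * ρ⁻¹ = (modelPairAux n k N mm).1 ∧
        ρ * τ * ρ⁻¹ = (modelPairAux n k N mm).2 := by
  classical
  set x₀ : Fin n := ⟨0, hn⟩ with hx₀
  have ht' : ∀ y : Fin n, ∃ i j : ℤ, (σ ^ i * τ ^ j) x₀ = y := by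
    intro y
    obtain ⟨w, hw, hwx⟩ := ht x₀ y
    obtain ⟨i, j, rfl⟩ := mem_closure_pair hc hw
    exact ⟨i, j, hwx⟩
  have hmul : ∀ i j a b : ℤ, (σ ^ i * τ ^ j) * (σ ^ a * τ ^ b) = σ ^ (i + a) * τ ^ (j + b) := by
    intro i j a b
    have h1 : Commute (τ ^ j) (σ ^ a) := hc.symm.zpow_zpow j a
    rw [zpow_add, zpow_add]
    calc σ ^ i * τ ^ j * (σ ^ a * τ ^ b) = σ ^ i * (τ ^ j * σ ^ a) * τ ^ b := by group
      _ = σ ^ i * (σ ^ a * τ ^ j) * τ ^ b := by rw [h1.eq]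
      _ = σ ^ i * σ ^ a * (τ ^ j * τ ^ b) := by group
  -- the cycle length k
  have hordσ : IsPeriodicPt (⇑σ) (orderOf σ) x₀ := by
    rw [IsPeriodicPt, IsFixedPt, Equiv.Perm.iterate_eq_pow, pow_orderOf_eq_one]
    rfl
  set k := Function.minimalPeriod (⇑σ) x₀ with hkdef
  have hkpos : 0 < k := IsPeriodicPt.minimalPeriod_pos (orderOf_pos σ) hordσ
  have hkper : σ ^ (k : ℤ) * τ ^ (0 : ℤ) = 1 := by
    refine free hc ht (x := x₀) ?_
    have h := isPeriodicPt_minimalPeriod (⇑σ) x₀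
    rw [IsPeriodicPt, IsFixedPt, Equiv.Perm.iterate_eq_pow] at h
    simpa [zpow_natCast] using h
  have hσk : σ ^ (k : ℤ) = 1 := by simpa using hkper
  have hordk : orderOf σ = k := by
    apply Nat.dvd_antisymm
    · apply orderOf_dvd_of_pow_eq_one
      have h := hσk; rw [zpow_natCast] at h; exact h
    · exact IsPeriodicPt.minimalPeriod_dvd hordσ
  have Dσ : ∀ i : ℤ, σ ^ i = 1 ↔ (k : ℤ) ∣ i := by
    intro i
    rw [← hordk]
    exact (orderOf_dvd_iff_zpow_eq_one (x := σ) (i := i)).symm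
  have hσcong : ∀ i i' : ℤ, (k : ℤ) ∣ (i - i') → σ ^ i = σ ^ i' := by
    intro i i' hdvd
    have h := (Dσ (i - i')).mpr hdvd
    rw [zpow_sub, mul_inv_eq_one] at h
    exact h
  -- the level N
  have hNex : ∃ j : ℕ, 0 < j ∧ ∃ i : ℤ, σ ^ i * τ ^ (j : ℤ) = 1 := by
    refine ⟨orderOf τ, orderOf_pos τ, 0, ?_⟩
    rw [zpow_natCast, pow_orderOf_eq_one, zpow_zero, one_mul]
  set N := Nat.find hNex with hNdef
  obtain ⟨hNpos, i₀, hi₀⟩ := Nat.find_spec hNex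
  -- the shift mm
  set mm := (i₀ % (k : ℤ)).toNat with hmmdef
  have hkz : (0:ℤ) < (k:ℤ) := by exact_mod_cast hkpos
  have hmmz : (mm : ℤ) = i₀ % (k : ℤ) := Int.toNat_of_nonneg (Int.emod_nonneg i₀ hkz.ne')
  have hmmlt : mm < k := by
    have h := Int.emod_lt_of_pos i₀ hkz
    omega
  have hσmm : σ ^ (mm : ℤ) = σ ^ i₀ := by
    refine hσcong _ _ ?_
    rw [hmmz, Int.emod_def]
    exact ⟨-(i₀ / k), by ring⟩
  have hrel : σ ^ (mm : ℤ) * τ ^ (N : ℤ) = 1 := by rw [hσmm]; exact hi₀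
  have hτN : τ ^ (N : ℤ) = σ ^ (-(mm : ℤ)) := by
    rw [zpow_neg]
    exact (mul_eq_one_iff_inv_eq.mp hrel).symm
  -- minimality of N
  have LN : ∀ j : ℤ, (∃ i : ℤ, σ ^ i * τ ^ j = 1) → (N : ℤ) ∣ j := by
    rintro j ⟨i, hij⟩
    have hNz : (0:ℤ) < (N:ℤ) := by exact_mod_cast hNpos
    set r := j % (N : ℤ) with hrdef
    set q := j / (N : ℤ) with hqdef
    have hjr : j = (N : ℤ) * q + r := (Int.mul_ediv_add_emod j N).symm
    have hr0 : 0 ≤ r := Int.emod_nonneg j hNz.ne'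
    have hrN : r < N := Int.emod_lt_of_pos j hNz
    have hτj : τ ^ j = σ ^ (-(mm : ℤ) * q) * τ ^ r := by
      rw [hjr, zpow_add, zpow_mul, hτN, ← zpow_mul]
    have hwit : σ ^ (i + -(mm:ℤ) * q) * τ ^ r = 1 := by
      rw [zpow_add, mul_assoc, ← hτj]
      exact hij
    by_cases hr : r = 0
    · exact ⟨q, by omega⟩
    · exfalso
      have hrnpos : 0 < r.toNat := by omega
      have hrnlt : r.toNat < N := by omega
      have := Nat.find_min hNex hrnlt
      exact this ⟨hrnpos, i + -(mm:ℤ) * q, by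
        rw [show ((r.toNat : ℕ) : ℤ) = r from Int.toNat_of_nonneg hr0]
        exact hwit⟩
  haveI instk : NeZero k := ⟨hkpos.ne'⟩
  haveI instN : NeZero N := ⟨hNpos.ne'⟩
  have hkval : ∀ a : ZMod k, ((a.val : ℕ) : ZMod k) = a := fun a => ZMod.natCast_rightInverse a
  have hNval : ∀ b : ZMod N, ((b.val : ℕ) : ZMod N) = b := fun b => ZMod.natCast_rightInverse b
  have hσval : ∀ i : ℤ, σ ^ i = σ ^ (((i : ZMod k)).val : ℤ) := by
    intro i
    refine hσcong _ _ ?_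
    rw [← ZMod.intCast_zmod_eq_zero_iff_dvd]
    push_cast
    rw [hkval]
    ring
  set φ : ZMod k × ZMod N → Fin n := fun p => (σ ^ (p.1.val : ℤ) * τ ^ (p.2.val : ℤ)) x₀ with hφdef
  have hφinj : Function.Injective φ := by
    intro p p' hpp
    have hfix : σ ^ ((p.1.val:ℤ) - p'.1.val) * τ ^ ((p.2.val:ℤ) - p'.2.val) = 1 := by
      refine free hc ht (x := x₀) ?_
      have expand : σ ^ ((p.1.val:ℤ) - p'.1.val) * τ ^ ((p.2.val:ℤ) - p'.2.val)
          = (σ ^ (-(p'.1.val:ℤ)) * τ ^ (-(p'.2.val:ℤ))) * (σ ^ ((p.1.val:ℤ)) * τ ^ ((p.2.val:ℤ))) := by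
        rw [hmul]
        ring_nf
      rw [expand, Equiv.Perm.mul_apply]
      have hpp' : (σ ^ ((p.1.val:ℤ)) * τ ^ ((p.2.val:ℤ))) x₀
          = (σ ^ ((p'.1.val:ℤ)) * τ ^ ((p'.2.val:ℤ))) x₀ := hpp
      rw [hpp', ← Equiv.Perm.mul_apply, hmul]
      simp
    have hb : p.2 = p'.2 := by
      have hdvd : (N:ℤ) ∣ ((p.2.val:ℤ) - p'.2.val) := LN _ ⟨_, hfix⟩
      have h1 := ZMod.val_lt p.2
      have h2 := ZMod.val_lt p'.2
      have h3 : (p.2.val:ℤ) - p'.2.val = 0 := by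
        rcases hdvd with ⟨c, hcc⟩
        have hcz : c = 0 := by nlinarith [hcc]
        rw [hcz, mul_zero] at hcc
        exact hcc
      have : p.2.val = p'.2.val := by omega
      rw [← hNval p.2, ← hNval p'.2, this]
    have ha : p.1 = p'.1 := by
      rw [hb, sub_self, zpow_zero, mul_one] at hfix
      have hdvd := (Dσ _).mp hfix
      have h1 := ZMod.val_lt p.1
      have h2 := ZMod.val_lt p'.1
      have h3 : (p.1.val:ℤ) - p'.1.val = 0 := by
        rcases hdvd with ⟨c, hcc⟩
        have hcz : c = 0 := by nlinarith [hcc]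
        rw [hcz, mul_zero] at hcc
        exact hcc
      have : p.1.val = p'.1.val := by omega
      rw [← hkval p.1, ← hkval p'.1, this]
    exact Prod.ext ha hb
  have hφsurj : Function.Surjective φ := by
    intro y
    obtain ⟨i, j, hij⟩ := ht' y
    have hNz : (0:ℤ) < (N:ℤ) := by exact_mod_cast hNpos
    set q := j / (N : ℤ) with hqdef
    set r := j % (N : ℤ) with hrdef
    have hjr : j = (N : ℤ) * q + r := (Int.mul_ediv_add_emod j N).symm
    have hr0 : 0 ≤ r := Int.emod_nonneg j hNz.ne'
    have hrN : r < N := Int.emod_lt_of_pos j hNz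
    have hrnat : ((r.toNat : ℕ) : ℤ) = r := Int.toNat_of_nonneg hr0
    have hτj : τ ^ j = σ ^ (-(mm : ℤ) * q) * τ ^ r := by
      rw [hjr, zpow_add, zpow_mul, hτN, ← zpow_mul]
    have hy : (σ ^ (i + -(mm:ℤ) * q) * τ ^ r) x₀ = y := by
      rw [zpow_add, mul_assoc, ← hτj]
      exact hij
    refine ⟨(((i + -(mm:ℤ) * q : ℤ) : ZMod k), ((r.toNat : ℕ) : ZMod N)), ?_⟩
    show (σ ^ ((((i + -(mm:ℤ) * q : ℤ) : ZMod k)).val : ℤ)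
        * τ ^ ((((r.toNat : ℕ) : ZMod N)).val : ℤ)) x₀ = y
    rw [← hσval]
    have hvr : (((r.toNat : ℕ) : ZMod N)).val = r.toNat := ZMod.val_cast_of_lt (by omega)
    rw [hvr]
    rw [show ((r.toNat : ℕ) : ℤ) = r from hrnat]
    exact hy
  have hφbij : Function.Bijective φ := ⟨hφinj, hφsurj⟩
  have hcard : k * N = n := by
    have h := Fintype.card_of_bijective hφbij
    rw [Fintype.card_prod, ZMod.card, ZMod.card, Fintype.card_fin] at h
    exact h
  set e : (ZMod k × ZMod N) ≃ Fin n := Equiv.ofBijective φ hφbij with hedef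
  have he : ∀ z, e z = φ z := fun z => rfl
  have hσe : ∀ z, σ (φ z) = φ (mσ k N z) := by
    rintro ⟨a, b⟩
    show σ ((σ ^ ((a.val:ℤ)) * τ ^ ((b.val:ℤ))) x₀) = φ (mσ k N (a, b))
    rw [mσ_apply]
    show _ = (σ ^ (((a+1).val:ℤ)) * τ ^ ((b.val:ℤ))) x₀
    rw [← Equiv.Perm.mul_apply, ← mul_assoc, ← zpow_one_add]
    have hcst : ((1 + (a.val:ℤ) : ℤ) : ZMod k) = a + 1 := by
      push_cast
      rw [hkval]
      ring
    have h1 : σ ^ (1 + (a.val:ℤ)) = σ ^ (((a+1).val:ℤ)) := by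
      rw [hσval (1 + (a.val:ℤ)), hcst]
    rw [h1]
  have hτe : ∀ z, τ (φ z) = φ (mτ k N mm z) := by
    rintro ⟨a, b⟩
    show τ ((σ ^ ((a.val:ℤ)) * τ ^ ((b.val:ℤ))) x₀) = φ (mτ k N mm (a, b))
    have hstep : τ * (σ ^ ((a.val:ℤ)) * τ ^ ((b.val:ℤ)))
        = σ ^ ((a.val:ℤ)) * τ ^ (1 + (b.val:ℤ)) := by
      have hcm : Commute τ (σ ^ ((a.val:ℤ))) := (hc.symm).zpow_right _
      rw [← mul_assoc, hcm.eq, mul_assoc, ← zpow_one_add]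
    rw [← Equiv.Perm.mul_apply, hstep]
    rw [mτ_apply]
    by_cases hb1 : b = -1
    · have hbval : (b.val:ℤ) + 1 = N := by
        have h1 : ((b.val + 1 : ℕ) : ZMod N) = 0 := by
          rw [Nat.cast_add, Nat.cast_one, hNval b, hb1]
          ring
        have h2 : N ∣ b.val + 1 := (ZMod.natCast_eq_zero_iff _ _).mp h1
        have h3 := ZMod.val_lt b
        have h4 := Nat.le_of_dvd (Nat.succ_pos _) h2
        omega
      have hbp1 : b + 1 = 0 := by rw [hb1]; ring
      rw [if_pos hb1, hbp1]
      show _ = (σ ^ (((a - (mm:ZMod k)).val:ℤ)) * τ ^ (((0:ZMod N).val:ℤ))) x₀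
      rw [ZMod.val_zero]
      have hτpow : τ ^ (1 + (b.val:ℤ)) = σ ^ (-(mm:ℤ)) := by
        rw [show (1 + (b.val:ℤ)) = (N:ℤ) by omega]
        exact hτN
      rw [hτpow]
      have hexp : σ ^ ((a.val:ℤ)) * σ ^ (-(mm:ℤ)) = σ ^ ((a.val:ℤ) + -(mm:ℤ)) := by
        rw [zpow_add]
      rw [hexp]
      have hcst : (((a.val:ℤ) + -(mm:ℤ) : ℤ) : ZMod k) = a - (mm:ZMod k) := by
        push_cast
        rw [hkval]
        ring
      have h1 : σ ^ ((a.val:ℤ) + -(mm:ℤ)) = σ ^ ((((a - (mm:ZMod k))).val:ℤ)) := by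
        rw [hσval ((a.val:ℤ) + -(mm:ℤ)), hcst]
      rw [h1]
      norm_num
    · have h3 := ZMod.val_lt b
      have hlt : b.val + 1 < N := by
        rcases Nat.lt_or_ge (b.val + 1) N with h | h
        · exact h
        · exfalso
          apply hb1
          have hEq : b.val + 1 = N := by omega
          have h5 : ((b.val + 1 : ℕ) : ZMod N) = 0 := by rw [hEq, ZMod.natCast_self]
          rw [Nat.cast_add, Nat.cast_one, hNval b] at h5
          linear_combination h5
      have hbval : (b+1).val = b.val + 1 := by
        have h6 : b + 1 = ((b.val + 1 : ℕ) : ZMod N) := by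
          rw [Nat.cast_add, Nat.cast_one, hNval b]
        rw [h6, ZMod.val_cast_of_lt hlt]
      rw [if_neg hb1, sub_zero]
      show _ = (σ ^ ((a.val:ℤ)) * τ ^ (((b+1).val:ℤ)) ) x₀
      rw [hbval]
      congr 2
      push_cast
      ring
  -- assemble the conjugation
  set E : (ZMod k × ZMod N) ≃ Fin n := stdE n k N hcard with hEdef
  set ρ : Perm (Fin n) := e.symm.trans E with hρdef
  have hρinv : ∀ x : Fin n, ρ⁻¹ x = e (E.symm x) := fun x => rfl
  have hρap : ∀ z, ρ (e z) = E z := by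
    intro z
    show E (e.symm (e z)) = E z
    rw [Equiv.symm_apply_apply]
  have hρσ : ρ * σ * ρ⁻¹ = pcHom E (mσ k N) := by
    apply Equiv.ext
    intro x
    show ρ (σ (ρ⁻¹ x)) = pcHom E (mσ k N) x
    rw [pcHom_apply, hρinv]
    have h1 : σ (e (E.symm x)) = e (mσ k N (E.symm x)) := by
      rw [he, he]
      exact hσe _
    rw [h1, hρap]
  have hρτ : ρ * τ * ρ⁻¹ = pcHom E (mτ k N mm) := by
    apply Equiv.ext
    intro x
    show ρ (τ (ρ⁻¹ x)) = pcHom E (mτ k N mm) x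
    rw [pcHom_apply, hρinv]
    have h1 : τ (e (E.symm x)) = e (mτ k N mm (E.symm x)) := by
      rw [he, he]
      exact hτe _
    rw [h1, hρap]
  refine ⟨k, N, mm, ⟨hcard, hkpos, hNpos⟩, hmmlt, ρ, ?_, ?_⟩
  · rw [modelPairAux, dif_pos (⟨hcard, hkpos, hNpos⟩ : k * N = n ∧ 0 < k ∧ 0 < N)]
    exact hρσ
  · rw [modelPairAux, dif_pos (⟨hcard, hkpos, hNpos⟩ : k * N = n ∧ 0 < k ∧ 0 < N)]
    exact hρτ

end CTP


open CTP Equiv Function in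
/-- Let `(σ,τ)` be a commuting pair in `Σₙ` whose generated subgroup acts
transitively on `{1,…,n}`.  Then all cycles of `σ` have the same length, and the
simultaneous conjugacy classes of such pairs are classified by a cycle length
`k ∣ n` together with a shift `m ∈ {0,…,k−1}`; in particular there are exactly
`σ₁(n) = ∑_{k ∣ n} k` such classes. -/
theorem commuting_transitive_pairs_classification (n : ℕ) (hn : 0 < n) :
    (∀ σ τ : Equiv.Perm (Fin n), Commute σ τ →
      (∀ x y : Fin n, ∃ w ∈ Subgroup.closure ({σ, τ} : Set (Equiv.Perm (Fin n))), w x = y) →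
      ∀ x y : Fin n, Function.minimalPeriod ⇑σ x = Function.minimalPeriod ⇑σ y) ∧
    ∃ R : Finset (Equiv.Perm (Fin n) × Equiv.Perm (Fin n)),
      R.card = ∑ d ∈ Nat.divisors n, d ∧
      (∀ p ∈ R, Commute p.1 p.2 ∧
        ∀ x y : Fin n, ∃ w ∈ Subgroup.closure ({p.1, p.2} : Set (Equiv.Perm (Fin n))), w x = y) ∧
      (∀ p : Equiv.Perm (Fin n) × Equiv.Perm (Fin n), Commute p.1 p.2 →
        (∀ x y : Fin n, ∃ w ∈ Subgroup.closure ({p.1, p.2} : Set (Equiv.Perm (Fin n))), w x = y) →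
        ∃! r : Equiv.Perm (Fin n) × Equiv.Perm (Fin n), r ∈ R ∧
          ∃ ρ : Equiv.Perm (Fin n), ρ * p.1 * ρ⁻¹ = r.1 ∧ ρ * p.2 * ρ⁻¹ = r.2) := by
  constructor
  · -- all cycles of σ have the same length
    intro σ τ hc ht x y
    have key : ∀ u v : Fin n, ∀ j : ℕ, IsPeriodicPt (⇑σ) j u → IsPeriodicPt (⇑σ) j v := by
      intro u v j hj
      rw [IsPeriodicPt, IsFixedPt, Equiv.Perm.iterate_eq_pow] at hj ⊢
      have h1 : (σ ^ (j:ℤ) * τ ^ (0:ℤ)) u = u := by simpa [zpow_natCast] using hj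
      have h2 := free hc ht h1
      have h3 : σ ^ (j:ℤ) = 1 := by simpa using h2
      rw [zpow_natCast] at h3
      rw [h3]
      simp
    exact minimalPeriod_eq_of_iff' (fun j => ⟨key x y j, key y x j⟩)
  · -- the classification
    classical
    set D := (n.divisors).sigma (fun k => Finset.range k) with hD
    set F : (Σ _ : ℕ, ℕ) → Perm (Fin n) × Perm (Fin n) :=
      fun p => modelPairAux n p.1 (n / p.1) p.2 with hF
    have hvalid : ∀ p ∈ D, (p.1 * (n / p.1) = n ∧ 0 < p.1 ∧ 0 < n / p.1) ∧ p.2 < p.1 := by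
      rintro ⟨kk, mmm⟩ hp
      rw [hD, Finset.mem_sigma] at hp
      have hdvd := (Nat.mem_divisors.mp hp.1).1
      have hkpos := Nat.pos_of_mem_divisors hp.1
      exact ⟨⟨Nat.mul_div_cancel' hdvd, hkpos,
        Nat.div_pos (Nat.le_of_dvd hn hdvd) hkpos⟩, Finset.mem_range.mp hp.2⟩
    refine ⟨D.image F, ?_, ?_, ?_⟩
    · -- cardinality
      rw [Finset.card_image_of_injOn, hD, Finset.card_sigma]
      · simp
      · rintro ⟨k1, m1⟩ h1 ⟨k2, m2⟩ h2 heq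
        obtain ⟨v1, w1⟩ := hvalid _ h1
        obtain ⟨v2, w2⟩ := hvalid _ h2
        have heq1 : (1 : Perm (Fin n)) * (modelPairAux n k1 (n / k1) m1).1 * (1 : Perm (Fin n))⁻¹
            = (modelPairAux n k2 (n / k2) m2).1 := by
          simpa using congrArg Prod.fst heq
        have heq2 : (1 : Perm (Fin n)) * (modelPairAux n k1 (n / k1) m1).2 * (1 : Perm (Fin n))⁻¹
            = (modelPairAux n k2 (n / k2) m2).2 := by
          simpa using congrArg Prod.snd heq
        obtain ⟨hk, -, hm⟩ := model_rigid v1 v2 w1 w2 1 heq1 heq2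
        subst hk
        subst hm
        rfl
    · -- each representative is a commuting transitive pair
      intro p hp
      rw [Finset.mem_image] at hp
      obtain ⟨q, hq, rfl⟩ := hp
      obtain ⟨v, w⟩ := hvalid q hq
      obtain ⟨s1, s2, -⟩ := modelPairAux_spec n q.1 (n / q.1) q.2 v w
      exact ⟨s1, s2⟩
    · -- existence and uniqueness of the representative
      rintro ⟨σ, τ⟩ hc ht
      obtain ⟨k, N, mm, hval, hmm, ρ, hρ1, hρ2⟩ := exists_model hn σ τ hc ht
      have hNdiv : N = n / k := by rw [← hval.1, Nat.mul_div_cancel_left _ hval.2.1]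
      refine ⟨modelPairAux n k N mm, ⟨?_, ρ, hρ1, hρ2⟩, ?_⟩
      · rw [Finset.mem_image]
        refine ⟨⟨k, mm⟩, ?_, ?_⟩
        · rw [hD, Finset.mem_sigma]
          exact ⟨Nat.mem_divisors.mpr ⟨⟨N, hval.1.symm⟩, hn.ne'⟩, Finset.mem_range.mpr hmm⟩
        · show modelPairAux n k (n / k) mm = modelPairAux n k N mm
          rw [← hNdiv]
      · rintro r' ⟨hr', ρ', h1', h2'⟩
        rw [Finset.mem_image] at hr'
        obtain ⟨⟨k', m'⟩, hq', rfl⟩ := hr'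
        obtain ⟨v', w'⟩ := hvalid _ hq'
        have c1 : (ρ' * ρ⁻¹) * (modelPairAux n k N mm).1 * (ρ' * ρ⁻¹)⁻¹
            = (modelPairAux n k' (n / k') m').1 := by
          rw [← hρ1, ← h1']
          group
        have c2 : (ρ' * ρ⁻¹) * (modelPairAux n k N mm).2 * (ρ' * ρ⁻¹)⁻¹
            = (modelPairAux n k' (n / k') m').2 := by
          rw [← hρ2, ← h2']
          group
        obtain ⟨hk, hN, hm⟩ := model_rigid ⟨hval.1, hval.2.1, hval.2.2⟩ v' hmm w'
          (ρ' * ρ⁻¹) c1 c2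
        have hk2 : k = k' := hk
        have hm2 : mm = m' := hm
        show modelPairAux n k' (n / k') m' = modelPairAux n k N mm
        rw [← hk2, ← hm2, ← hNdiv]
end
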